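/- Let L be a 3-dimensional complex ω-Lie algebra with ω not identically zero. Then the commutator subalgebra L' = [L,L] has dimension 2 or 3. -/

import Mathlib

/-!
Pick `a, b` with `ω a b ≠ 0`. Solving the ω-Jacobi identity for `ω a b • z` shows that every
`z` lies in `L' + span {a, b}`. If `L'` were contained in a line `K v`, every bracket with `v`
would be a multiple of `v`, and the Jacobiator of `(b, v, a)` would vanish; its ω-side
`ω b v • a + ω v a • b + ω a b • v = 0` then puts `v` in `span {a, b}`, so that
`L = span {a, b}` has dimension at most `2`.
-/

open Module Submodule

namespace OmegaLie

variable {K L : Type*} [Field K] [AddCommGroup L] [Module K L]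

def commutatorSpan (bracket : L →ₗ[K] L →ₗ[K] L) : Submodule K L :=
  span K (Set.range fun p : L × L => bracket p.1 p.2)

def OmegaJacobi (bracket : L →ₗ[K] L →ₗ[K] L) (ω : L →ₗ[K] L →ₗ[K] K) : Prop :=
  ∀ a b c : L,
    bracket (bracket a b) c + bracket (bracket b c) a + bracket (bracket c a) b
      = ω a b • c + ω b c • a + ω c a • b

variable {bracket : L →ₗ[K] L →ₗ[K] L} {ω : L →ₗ[K] L →ₗ[K] K}

theorem bracket_mem_commutatorSpan (x y : L) : bracket x y ∈ commutatorSpan bracket :=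
  subset_span ⟨(x, y), rfl⟩

theorem bracket_self_eq_zero [NeZero (2 : K)] (hanti : ∀ a b : L, bracket a b = -bracket b a)
    (x : L) : bracket x x = 0 := by
  have h : (2 : K) • bracket x x = 0 := by
    rw [two_smul]
    nth_rewrite 2 [hanti x x]
    exact add_neg_cancel _
  exact (smul_eq_zero.mp h).resolve_left two_ne_zero

theorem commutatorSpan_sup_span_pair_eq_top (hjac : OmegaJacobi bracket ω) {a b : L}
    (hab : ω a b ≠ 0) : commutatorSpan bracket ⊔ span K {a, b} = ⊤ := by
  refine eq_top_iff.mpr fun z _ => ?_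
  have hJ : ω a b • z + ω b z • a + ω z a • b ∈ commutatorSpan bracket := by
    rw [← hjac a b z]
    exact add_mem (add_mem (bracket_mem_commutatorSpan _ _) (bracket_mem_commutatorSpan _ _))
      (bracket_mem_commutatorSpan _ _)
  have hpair : ω b z • a + ω z a • b ∈ span K {a, b} :=
    add_mem (smul_mem _ _ (subset_span (by simp))) (smul_mem _ _ (subset_span (by simp)))
  have hz : ω a b • z = (ω a b • z + ω b z • a + ω z a • b) - (ω b z • a + ω z a • b) := by
    abel
  rw [← inv_smul_smul₀ hab z, hz]
  exact smul_mem _ _ (sub_mem (mem_sup_left hJ) (mem_sup_right hpair))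

/-- If `L' ⊆ K v`, write `[v, z] = d z • v`; then `[[x, v], y] = -(d x * d y) • v`,
`[[v, y], x] = (d y * d x) • v` and `[[y, x], v] ∈ K [v, v] = 0`. -/
theorem omega_cyclic_eq_zero_of_commutatorSpan_le_span_singleton [NeZero (2 : K)]
    (hanti : ∀ a b : L, bracket a b = -bracket b a) (hjac : OmegaJacobi bracket ω) {v : L}
    (hv : commutatorSpan bracket ≤ span K {v}) (x y : L) :
    ω x v • y + ω v y • x + ω y x • v = 0 := by
  have hline : ∀ z w : L, ∃ c : K, bracket z w = c • v := fun z w =>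
    (mem_span_singleton.mp (hv (bracket_mem_commutatorSpan z w))).imp fun _ h => h.symm
  obtain ⟨dx, hdx⟩ := hline v x
  obtain ⟨dy, hdy⟩ := hline v y
  obtain ⟨c, hc⟩ := hline y x
  rw [← hjac x v y, hanti x v, hdx, hdy, hc]
  simp only [map_neg, map_smul, LinearMap.neg_apply, LinearMap.smul_apply, hdx, hdy,
    bracket_self_eq_zero hanti]
  module

theorem mem_span_pair_of_commutatorSpan_le_span_singleton [NeZero (2 : K)]
    (hanti : ∀ a b : L, bracket a b = -bracket b a) (hjac : OmegaJacobi bracket ω) {a b v : L}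
    (hab : ω a b ≠ 0) (hv : commutatorSpan bracket ≤ span K {v}) : v ∈ span K {a, b} := by
  have h := omega_cyclic_eq_zero_of_commutatorSpan_le_span_singleton hanti hjac hv b a
  rw [← smul_mem_iff _ hab, eq_neg_of_add_eq_zero_right h]
  exact neg_mem (add_mem (smul_mem _ _ (subset_span (by simp)))
    (smul_mem _ _ (subset_span (by simp))))

theorem two_le_finrank_commutatorSpan [NeZero (2 : K)]
    (hanti : ∀ a b : L, bracket a b = -bracket b a) (hjac : OmegaJacobi bracket ω) {a b : L}
    (hab : ω a b ≠ 0) (hL : 3 ≤ finrank K L) : 2 ≤ finrank K (commutatorSpan bracket) := by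
  have : Module.Finite K L := Module.finite_of_finrank_pos (by omega)
  by_contra! hlt
  obtain ⟨v, hv⟩ := ((commutatorSpan bracket).finrank_le_one_iff_isPrincipal).mp (by omega)
  have hvab := mem_span_pair_of_commutatorSpan_le_span_singleton hanti hjac hab hv.le
  have htop : (⊤ : Submodule K L) ≤ span K {a, b} := by
    rw [← commutatorSpan_sup_span_pair_eq_top hjac hab, hv]
    exact sup_le ((span_singleton_le_iff_mem _ _).mpr hvab) le_rfl
  have hpair : finrank K (span K ({a, b} : Set L)) ≤ 2 := by
    classical
    exact (finrank_span_le_card ({a, b} : Set L)).trans (by simpa using Finset.card_le_two)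
  have := (Submodule.finrank_mono htop).trans hpair
  rw [finrank_top] at this
  omega

end OmegaLie

theorem omega_lie_nontrivial_derived_dim_general
    {L : Type*} [AddCommGroup L] [Module ℂ L]
    (bracket : L →ₗ[ℂ] L →ₗ[ℂ] L) (ω : L →ₗ[ℂ] L →ₗ[ℂ] ℂ)
    (hanti : ∀ a b : L, bracket a b = - bracket b a)
    (hjac : ∀ a b c : L,
      bracket (bracket a b) c + bracket (bracket b c) a + bracket (bracket c a) b
        = ω a b • c + ω b c • a + ω c a • b)
    (hdim : Module.finrank ℂ L = 3)
    (hω : ¬ ∀ a b : L, ω a b = 0) :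
    Module.finrank ℂ
        ↥(Submodule.span ℂ (Set.range fun p : L × L => bracket p.1 p.2)) = 2 ∨
      Module.finrank ℂ
        ↥(Submodule.span ℂ (Set.range fun p : L × L => bracket p.1 p.2)) = 3 := by
  have : Module.Finite ℂ L := Module.finite_of_finrank_eq_succ hdim
  obtain ⟨a, b, hab⟩ : ∃ a b, ω a b ≠ 0 := by simpa using hω
  have hlower : 2 ≤ finrank ℂ (OmegaLie.commutatorSpan bracket) :=
    OmegaLie.two_le_finrank_commutatorSpan hanti hjac hab hdim.ge
  have hupper : finrank ℂ (OmegaLie.commutatorSpan bracket) ≤ 3 := hdim ▸ Submodule.finrank_le _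
  unfold OmegaLie.commutatorSpan at hlower hupper
  omega

/-- Let `L` be a 3-dimensional complex ω-Lie algebra with `ω` not identically zero.
Then the commutator subalgebra `L' = [L,L]` (the span of all brackets) has
dimension 2 or 3. -/
theorem omega_lie_nontrivial_derived_dim
    {L : Type*} [AddCommGroup L] [Module ℂ L] [FiniteDimensional ℂ L]
    (bracket : L →ₗ[ℂ] L →ₗ[ℂ] L) (ω : L →ₗ[ℂ] L →ₗ[ℂ] ℂ)
    (hanti : ∀ a b : L, bracket a b = - bracket b a)
    (hskew : ∀ a b : L, ω a b = - ω b a)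
    (hjac : ∀ a b c : L,
      bracket (bracket a b) c + bracket (bracket b c) a + bracket (bracket c a) b
        = ω a b • c + ω b c • a + ω c a • b)
    (hdim : Module.finrank ℂ L = 3)
    (hω : ¬ ∀ a b : L, ω a b = 0) :
    Module.finrank ℂ
        ↥(Submodule.span ℂ (Set.range fun p : L × L => bracket p.1 p.2)) = 2 ∨
      Module.finrank ℂ
        ↥(Submodule.span ℂ (Set.range fun p : L × L => bracket p.1 p.2)) = 3 :=
  omega_lie_nontrivial_derived_dim_general bracket ω hanti hjac hdim hω
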